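/- Fix c > 0 and suppose f solves the max-matching PDE with parameter c. Assume moreover that for each t ∈ [0,1] the function t ↦ ∫₀^∞ x·f(x,t) dx is differentiable with derivative ∫₀^∞ x·(∂f/∂t)(x,t) dx (differentiation under the integral sign is valid). Then for every t ∈ [0,1], ∫₀^∞ x·f(x,t) dx = 1. -/
import Mathlib

open MeasureTheory

/-- The right-hand side of the max-matching PDE with parameter `c`. -/
noncomputable def maxMatchRHS (c : ℝ) (f : ℝ → ℝ → ℝ) (x t : ℝ) : ℝ :=
  -(min x (2 * c)) * f x t
    - ((∫ x' in Set.Ioi (0 : ℝ), min x' (2 * c) * f x' t) /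
        (∫ x' in Set.Ioi (0 : ℝ), f x' t)) * f x t
    + (∫ x' in (0 : ℝ)..x, min x' (2 * c) * f x' t * f (x - x') t) /
        (∫ x' in Set.Ioi (0 : ℝ), f x' t)

/-- `f` solves the max-matching PDE with parameter `c`. -/
def SolvesMaxMatchingPDE (c : ℝ) (f : ℝ → ℝ → ℝ) : Prop :=
  Measurable (Function.uncurry f) ∧
  (∀ x t, 0 ≤ f x t) ∧
  (∀ x t, x < 0 → f x t = 0) ∧
  (∀ t ∈ Set.Icc (0 : ℝ) 1,
    IntegrableOn (fun x => f x t) (Set.Ioi 0) ∧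
    IntegrableOn (fun x => x * f x t) (Set.Ioi 0) ∧
    0 < ∫ x in Set.Ioi (0 : ℝ), f x t) ∧
  (∀ x, 0 ≤ x → f x 0 = Real.exp (-x)) ∧
  (∀ x, 0 ≤ x → ∀ t ∈ Set.Icc (0 : ℝ) 1,
    HasDerivWithinAt (fun s => f x s) (maxMatchRHS c f x t) (Set.Icc 0 1) t)

private lemma ae_ne_real (a : ℝ) : ∀ᵐ x : ℝ, x ≠ a := by
  rw [ae_iff]
  simp only [ne_eq, not_not, Set.setOf_eq_eq_singleton]
  exact measure_singleton a

private lemma integrable_of_on_Ioi {w : ℝ → ℝ} (h : IntegrableOn w (Set.Ioi 0))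
    (h0 : ∀ x, x < 0 → w x = 0) : Integrable w := by
  have hi : Integrable ((Set.Ioi (0:ℝ)).indicator w) := h.integrable_indicator measurableSet_Ioi
  refine hi.congr ?_
  filter_upwards [ae_ne_real 0] with x hx
  by_cases hxp : x ∈ Set.Ioi (0:ℝ)
  · simp [Set.indicator_of_mem hxp]
  · have hlt : x < 0 := lt_of_le_of_ne (not_lt.mp hxp) hx
    simp [Set.indicator_of_notMem hxp, h0 x hlt]

private lemma integral_eq_Ioi {w : ℝ → ℝ} (h0 : ∀ x, x < 0 → w x = 0) :
    ∫ x in Set.Ioi (0:ℝ), w x = ∫ x, w x := by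
  apply setIntegral_eq_integral_of_ae_compl_eq_zero
  filter_upwards [ae_ne_real 0] with x hx hmem
  exact h0 x (lt_of_le_of_ne (not_lt.mp hmem) hx)

private lemma conv_vanish {u v : ℝ → ℝ} (hu0 : ∀ x, x < 0 → u x = 0)
    (hv0 : ∀ x, x < 0 → v x = 0) {x : ℝ} (hx : x ≤ 0) :
    ∫ y, u y * v (x - y) = 0 := by
  apply integral_eq_zero_of_ae
  filter_upwards [ae_ne_real 0] with y hy
  rcases lt_or_gt_of_ne hy with h | h
  · simp [hu0 y h]
  · have h' : x - y < 0 := by linarith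
    simp [hv0 _ h']

private lemma conv_key {u v : ℝ → ℝ} (hu : Integrable u) (hv : Integrable v)
    (hU : Integrable (fun x => x * u x)) (hV : Integrable (fun x => x * v x))
    (hu0 : ∀ x, x < 0 → u x = 0) (hv0 : ∀ x, x < 0 → v x = 0) :
    IntegrableOn (fun x => x * ∫ y in (0:ℝ)..x, u y * v (x - y)) (Set.Ioi 0) ∧
    ∫ x in Set.Ioi (0:ℝ), (x * ∫ y in (0:ℝ)..x, u y * v (x - y)) =
      (∫ x, x * u x) * (∫ x, v x) + (∫ x, u x) * (∫ x, x * v x) := by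
  have hU0 : ∀ x, x < 0 → x * u x = 0 := fun x hx => by simp [hu0 x hx]
  have hV0 : ∀ x, x < 0 → x * v x = 0 := fun x hx => by simp [hv0 x hx]
  have h1 : Integrable (fun p : ℝ × ℝ => p.2 * u p.2 * v (p.1 - p.2)) (volume.prod volume) := by
    have := hU.convolution_integrand (ContinuousLinearMap.lsmul ℝ ℝ) hv
    simpa [smul_eq_mul] using this
  have h2 : Integrable (fun p : ℝ × ℝ => u p.2 * ((p.1 - p.2) * v (p.1 - p.2)))
      (volume.prod volume) := by
    have := hu.convolution_integrand (ContinuousLinearMap.lsmul ℝ ℝ) hV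
    simpa [smul_eq_mul] using this
  have hC1i : Integrable (fun x => ∫ y, y * u y * v (x - y)) := h1.integral_prod_left
  have hC2i : Integrable (fun x => ∫ y, u y * ((x - y) * v (x - y))) := h2.integral_prod_left
  have hae : ∀ᵐ x : ℝ, x ∈ Set.Ioi (0:ℝ) →
      x * ∫ y in (0:ℝ)..x, u y * v (x - y) =
        (∫ y, y * u y * v (x - y)) + ∫ y, u y * ((x - y) * v (x - y)) := by
    filter_upwards [h1.prod_right_ae, h2.prod_right_ae] with x hx1 hx2 hxpos
    have hle : (0:ℝ) ≤ x := le_of_lt hxpos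
    rw [intervalIntegral.integral_of_le hle, ← MeasureTheory.integral_const_mul]
    have hpt : (fun y => x * (u y * v (x - y)))
        = fun y => y * u y * v (x - y) + u y * ((x - y) * v (x - y)) := by
      funext y; ring
    rw [hpt]
    have hvanish : ∀ᵐ y : ℝ, y ∉ Set.Ioc 0 x →
        y * u y * v (x - y) + u y * ((x - y) * v (x - y)) = 0 := by
      filter_upwards [ae_ne_real 0, ae_ne_real x] with y hy0 hyx hmem
      rcases lt_or_gt_of_ne hy0 with hneg | hpos
      · simp [hu0 y hneg]
      · have hlt : x < y := by
          rcases lt_or_ge x y with h | h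
          · exact h
          · exact absurd ⟨hpos, h⟩ hmem
        have hsub : x - y < 0 := by linarith
        simp [hv0 _ hsub]
    rw [setIntegral_eq_integral_of_ae_compl_eq_zero hvanish, integral_add hx1 hx2]
  have haeR : (fun x => x * ∫ y in (0:ℝ)..x, u y * v (x - y))
      =ᵐ[volume.restrict (Set.Ioi 0)]
      fun x => (∫ y, y * u y * v (x - y)) + ∫ y, u y * ((x - y) * v (x - y)) :=
    (ae_restrict_iff' measurableSet_Ioi).mpr hae
  constructor
  · exact ((hC1i.add hC2i).integrableOn).congr_fun_ae haeR.symm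
  · rw [setIntegral_congr_ae measurableSet_Ioi hae]
    have hext : ∫ x in Set.Ioi (0:ℝ),
        ((∫ y, y * u y * v (x - y)) + ∫ y, u y * ((x - y) * v (x - y))) =
        ∫ x, ((∫ y, y * u y * v (x - y)) + ∫ y, u y * ((x - y) * v (x - y))) := by
      apply setIntegral_eq_integral_of_forall_compl_eq_zero
      intro x hx
      have hx' : x ≤ 0 := not_lt.mp hx
      rw [conv_vanish hU0 hv0 hx', conv_vanish hu0 hV0 hx', add_zero]
    rw [hext, integral_add hC1i hC2i]
    have hint1 : ∫ x, (∫ y, y * u y * v (x - y)) = (∫ x, x * u x) * ∫ x, v x := by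
      rw [integral_integral_swap (by exact h1)]
      simp_rw [MeasureTheory.integral_const_mul, integral_sub_right_eq_self v,
        MeasureTheory.integral_mul_const]
    have hint2 : ∫ x, (∫ y, u y * ((x - y) * v (x - y))) = (∫ x, u x) * ∫ x, x * v x := by
      rw [integral_integral_swap (by exact h2)]
      simp_rw [MeasureTheory.integral_const_mul,
        integral_sub_right_eq_self (fun z => z * v z), MeasureTheory.integral_mul_const]
    rw [hint1, hint2]

/-- Assuming differentiation under the integral sign is valid, the total length
`∫₀^∞ x·f(x,t) dx` is an invariant of the max-matching PDE, equal to `1`. -/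
theorem stmt13 (c : ℝ) (hc : 0 < c) (f : ℝ → ℝ → ℝ) (hf : SolvesMaxMatchingPDE c f)
    (hD : ∀ t ∈ Set.Icc (0 : ℝ) 1,
      HasDerivWithinAt (fun s => ∫ x in Set.Ioi (0 : ℝ), x * f x s)
        (∫ x in Set.Ioi (0 : ℝ), x * maxMatchRHS c f x t) (Set.Icc 0 1) t) :
    ∀ t ∈ Set.Icc (0 : ℝ) 1, (∫ x in Set.Ioi (0 : ℝ), x * f x t) = 1 := by
  obtain ⟨hmeas, hpos, hneg, hint, hinit, _hpde⟩ := hf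
  have hft : ∀ t : ℝ, Measurable fun x => f x t := fun t =>
    hmeas.comp (measurable_id.prodMk measurable_const)
  -- the derivative vanishes
  have hzero : ∀ t ∈ Set.Icc (0:ℝ) 1,
      (∫ x in Set.Ioi (0:ℝ), x * maxMatchRHS c f x t) = 0 := by
    intro t ht
    obtain ⟨hvI, hxvI, hNpos⟩ := hint t ht
    have humeas : Measurable (fun x => min x (2*c) * f x t) :=
      (measurable_id.min measurable_const).mul (hft t)
    have huI : IntegrableOn (fun x => min x (2*c) * f x t) (Set.Ioi 0) := by
      refine Integrable.mono' (hvI.const_mul (2*c)) humeas.aestronglyMeasurable.restrict ?_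
      filter_upwards [ae_restrict_mem measurableSet_Ioi] with x hx
      have hb : 0 ≤ min x (2*c) := le_min (le_of_lt hx) (by positivity)
      rw [Real.norm_eq_abs, abs_of_nonneg (mul_nonneg hb (hpos x t))]
      exact mul_le_mul_of_nonneg_right (min_le_right _ _) (hpos x t)
    have hxuI : IntegrableOn (fun x => x * (min x (2*c) * f x t)) (Set.Ioi 0) := by
      refine Integrable.mono' (hxvI.const_mul (2*c))
        ((measurable_id.mul humeas).aestronglyMeasurable.restrict) ?_
      filter_upwards [ae_restrict_mem measurableSet_Ioi] with x hx
      have hxpos : (0:ℝ) ≤ x := le_of_lt hx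
      have hb : 0 ≤ min x (2*c) := le_min hxpos (by positivity)
      rw [Real.norm_eq_abs, abs_of_nonneg (mul_nonneg hxpos (mul_nonneg hb (hpos x t)))]
      calc x * (min x (2*c) * f x t) ≤ x * (2*c * f x t) :=
            mul_le_mul_of_nonneg_left
              (mul_le_mul_of_nonneg_right (min_le_right _ _) (hpos x t)) hxpos
        _ = 2*c * (x * f x t) := by ring
    have hvz : ∀ x, x < 0 → f x t = 0 := fun x hx => hneg x t hx
    have huz : ∀ x, x < 0 → min x (2*c) * f x t = 0 := fun x hx => by simp [hneg x t hx]
    have hu : Integrable (fun x => min x (2*c) * f x t) := integrable_of_on_Ioi huI huz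
    have hv : Integrable (fun x => f x t) := integrable_of_on_Ioi hvI hvz
    have hUg : Integrable (fun x => x * (min x (2*c) * f x t)) :=
      integrable_of_on_Ioi hxuI (fun x hx => by simp [hneg x t hx])
    have hVg : Integrable (fun x => x * f x t) :=
      integrable_of_on_Ioi hxvI (fun x hx => by simp [hneg x t hx])
    obtain ⟨hconvI, hconvEq⟩ := conv_key hu hv hUg hVg huz hvz
    have hrw : (fun x => x * maxMatchRHS c f x t) = fun x =>
        -(x * (min x (2*c) * f x t))
        + (-((∫ x' in Set.Ioi (0:ℝ), min x' (2*c) * f x' t) /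
            (∫ x' in Set.Ioi (0:ℝ), f x' t)) * (x * f x t))
        + (x * (∫ x' in (0:ℝ)..x, min x' (2*c) * f x' t * f (x - x') t)) /
            (∫ x' in Set.Ioi (0:ℝ), f x' t) := by
      funext x; simp only [maxMatchRHS]; ring
    rw [hrw]
    have i1 : IntegrableOn (fun x => -(x * (min x (2*c) * f x t))) (Set.Ioi 0) := hxuI.neg
    have i2 : IntegrableOn (fun x =>
        -((∫ x' in Set.Ioi (0:ℝ), min x' (2*c) * f x' t) /
            (∫ x' in Set.Ioi (0:ℝ), f x' t)) * (x * f x t)) (Set.Ioi 0) :=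
      hxvI.const_mul _
    have i3 : IntegrableOn (fun x =>
        (x * (∫ x' in (0:ℝ)..x, min x' (2*c) * f x' t * f (x - x') t)) /
            (∫ x' in Set.Ioi (0:ℝ), f x' t)) (Set.Ioi 0) :=
      hconvI.div_const _
    have i12 : IntegrableOn (fun x =>
        -(x * (min x (2*c) * f x t))
        + -((∫ x' in Set.Ioi (0:ℝ), min x' (2*c) * f x' t) /
            (∫ x' in Set.Ioi (0:ℝ), f x' t)) * (x * f x t)) (Set.Ioi 0) := i1.add i2
    rw [integral_add i12 i3, integral_add i1 i2, integral_neg,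
      MeasureTheory.integral_const_mul, MeasureTheory.integral_div, hconvEq,
      ← integral_eq_Ioi (w := fun x => x * (min x (2*c) * f x t))
        (fun x hx => by simp [hneg x t hx]),
      ← integral_eq_Ioi (w := fun x => f x t) hvz,
      ← integral_eq_Ioi (w := fun x => min x (2*c) * f x t) huz,
      ← integral_eq_Ioi (w := fun x => x * f x t) (fun x hx => by simp [hneg x t hx])]
    field_simp
    ring
  -- constancy
  intro t ht
  have h0mem : (0:ℝ) ∈ Set.Icc (0:ℝ) 1 := ⟨le_refl 0, zero_le_one⟩
  have hbound := (convex_Icc (0:ℝ) 1).norm_image_sub_le_of_norm_hasDerivWithin_le (C := 0)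
    (f' := fun s => ∫ x in Set.Ioi (0:ℝ), x * maxMatchRHS c f x s)
    (fun s hs => hD s hs) (fun s hs => by simp only [hzero s hs, norm_zero, le_refl]) h0mem ht
  rw [zero_mul] at hbound
  have hconst : (∫ x in Set.Ioi (0:ℝ), x * f x t) = ∫ x in Set.Ioi (0:ℝ), x * f x 0 := by
    have := norm_le_zero_iff.mp hbound
    exact sub_eq_zero.mp this
  rw [hconst]
  have hEq : Set.EqOn (fun x => x * f x 0) (fun x => x * Real.exp (-x)) (Set.Ioi 0) := by
    intro x hx
    simp only
    rw [hinit x (le_of_lt hx)]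
  rw [setIntegral_congr_fun measurableSet_Ioi hEq]
  have h2 := Real.Gamma_eq_integral (by norm_num : (0:ℝ) < 2)
  rw [Real.Gamma_two] at h2
  rw [setIntegral_congr_fun measurableSet_Ioi
    (fun x (hx : x ∈ Set.Ioi (0:ℝ)) => by
      show x * Real.exp (-x) = Real.exp (-x) * x ^ ((2:ℝ) - 1)
      rw [show (2:ℝ) - 1 = 1 by norm_num, Real.rpow_one, mul_comm])]
  exact h2.symm
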